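/- Let a, b, x₀ be real numbers with a > b > 0, and define f : ℝ → ℝ by f(x) = √(a² + x²) − √(b² + x²) − x·[arsinh(x/a) − arsinh(x/b) − arsinh(x₀/a) + arsinh(x₀/b)]. Then f is strictly convex on ℝ. -/

import Mathlib

/-!
With `φ_c(x) = √(c² + x²) − x·arsinh(x/c)` one has `φ_c' = −arsinh(x/c)`, and `f` is
`φ_a − φ_b` plus a linear function. Hence `f' = arsinh(x/b) − arsinh(x/a) + const`, which is
strictly increasing because its derivative `1/√(b² + x²) − 1/√(a² + x²)` is positive for `a > b > 0`.
-/

open Real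

lemma hasDerivAt_arsinh_div {c : ℝ} (hc : 0 < c) (x : ℝ) :
    HasDerivAt (fun y => arsinh (y / c)) (√(c ^ 2 + x ^ 2))⁻¹ x := by
  have hsqrt : √(1 + (x / c) ^ 2) = √(c ^ 2 + x ^ 2) / c := by
    rw [show 1 + (x / c) ^ 2 = (c ^ 2 + x ^ 2) / c ^ 2 by field_simp,
      sqrt_div (by positivity), sqrt_sq hc.le]
  have hpos : 0 < √(c ^ 2 + x ^ 2) := sqrt_pos.mpr (by positivity)
  refine ((hasDerivAt_id x).div_const c).arsinh.congr_deriv ?_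
  rw [id, hsqrt, smul_eq_mul]
  field_simp

lemma hasDerivAt_sqrt_sq_add {c : ℝ} (hc : c ≠ 0) (x : ℝ) :
    HasDerivAt (fun y => √(c ^ 2 + y ^ 2)) (x / √(c ^ 2 + x ^ 2)) x := by
  have hpos : 0 < c ^ 2 + x ^ 2 := by positivity
  refine (((hasDerivAt_pow 2 x).const_add (c ^ 2)).sqrt hpos.ne').congr_deriv ?_
  field_simp
  ring

lemma hasDerivAt_sqrt_sq_add_sub_mul_arsinh_div {c : ℝ} (hc : 0 < c) (x : ℝ) :
    HasDerivAt (fun y => √(c ^ 2 + y ^ 2) - y * arsinh (y / c)) (-arsinh (x / c)) x := by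
  refine ((hasDerivAt_sqrt_sq_add hc.ne' x).sub
    ((hasDerivAt_id x).mul (hasDerivAt_arsinh_div hc x))).congr_deriv ?_
  have hpos : 0 < √(c ^ 2 + x ^ 2) := sqrt_pos.mpr (by positivity)
  rw [id]
  field_simp
  ring

lemma strictMono_arsinh_div_sub_arsinh_div {a b : ℝ} (hb : 0 < b) (hab : b < a) :
    StrictMono fun x => arsinh (x / b) - arsinh (x / a) := by
  refine strictMono_of_deriv_pos fun x => ?_
  have hderiv : HasDerivAt (fun x => arsinh (x / b) - arsinh (x / a))
      ((√(b ^ 2 + x ^ 2))⁻¹ - (√(a ^ 2 + x ^ 2))⁻¹) x :=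
    (hasDerivAt_arsinh_div hb x).sub (hasDerivAt_arsinh_div (hb.trans hab) x)
  rw [hderiv.deriv, sub_pos]
  exact inv_strictAnti₀ (sqrt_pos.mpr (by positivity))
    (sqrt_lt_sqrt (by positivity) (by nlinarith))

/-- For `a > b > 0`, the function
`f(x) = √(a² + x²) − √(b² + x²)
        − x·[arsinh(x/a) − arsinh(x/b) − arsinh(x₀/a) + arsinh(x₀/b)]`
is strictly convex on `ℝ`. -/
theorem stmt_3 (a b x₀ : ℝ) (hab : a > b) (hb : b > 0)
    (f : ℝ → ℝ)
    (hf : ∀ x, f x =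
      Real.sqrt (a ^ 2 + x ^ 2) - Real.sqrt (b ^ 2 + x ^ 2) -
        x * (Real.arsinh (x / a) - Real.arsinh (x / b)
              - Real.arsinh (x₀ / a) + Real.arsinh (x₀ / b))) :
    StrictConvexOn ℝ Set.univ f := by
  set K := arsinh (x₀ / a) - arsinh (x₀ / b)
  have hf_eq : f = fun x => (√(a ^ 2 + x ^ 2) - x * arsinh (x / a))
      - (√(b ^ 2 + x ^ 2) - x * arsinh (x / b)) + x * K := by
    funext x
    rw [hf]
    ring
  have hderiv : ∀ x, HasDerivAt f (arsinh (x / b) - arsinh (x / a) + K) x := by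
    intro x
    rw [hf_eq]
    refine (((hasDerivAt_sqrt_sq_add_sub_mul_arsinh_div (hb.trans hab) x).sub
      (hasDerivAt_sqrt_sq_add_sub_mul_arsinh_div hb x)).add
        ((hasDerivAt_id x).mul_const K)).congr_deriv ?_
    ring
  have hf' : deriv f = fun x => arsinh (x / b) - arsinh (x / a) + K :=
    funext fun x => (hderiv x).deriv
  refine StrictMono.strictConvexOn_univ_of_deriv
    (continuous_iff_continuousAt.mpr fun x => (hderiv x).continuousAt) ?_
  rw [hf']
  exact (strictMono_arsinh_div_sub_arsinh_div hb hab).add_const K
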